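/- Let n ≥ 4 and let α_n be an optimal set of n-means for P. Then card(α_n ∩ [0,1/3]) ≥ 2 and card(α_n ∩ [2/3,1]) ≥ 2. -/

import Mathlib

open MeasureTheory Set
open scoped ENNReal

noncomputable section

/-- The similarity map `S_j(x) = x/3^j + 1 - 1/3^(j-1)`. -/
def Smap (j : ℕ) (x : ℝ) : ℝ := x / 3 ^ j + 1 - 1 / 3 ^ (j - 1)

/-- The similarity ratio `s_j = 3^(-j)`. -/
def srat (j : ℕ) : ℝ := (3 : ℝ)⁻¹ ^ j

/-- The probability `p_j = 2^(-j)`. -/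
def prob (j : ℕ) : ℝ := (2 : ℝ)⁻¹ ^ j

/-- `J_j = S_j([0,1])`. -/
def Jset (j : ℕ) : Set ℝ := Smap j '' Set.Icc 0 1

/-- For a word `ω = ω₁⋯ω_n`, `S_ω = S_{ω₁} ∘ ⋯ ∘ S_{ω_n}`. -/
def Sword : List ℕ → ℝ → ℝ
  | [] => id
  | j :: ω => Smap j ∘ Sword ω

/-- `s_ω = s_{ω₁} ⋯ s_{ω_n}`. -/
def sword (ω : List ℕ) : ℝ := (ω.map srat).prod

/-- `p_ω = p_{ω₁} ⋯ p_{ω_n}`. -/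
def pword (ω : List ℕ) : ℝ := (ω.map prob).prod

/-- `J_ω = S_ω([0,1])`. -/
def Jword (ω : List ℕ) : Set ℝ := Sword ω '' Set.Icc 0 1

/-- `ω⁻(ω_{|ω|} + j)` : the word obtained from `ω` by increasing its last letter by `j`. -/
def wordInc (ω : List ℕ) (j : ℕ) : List ℕ := ω.dropLast ++ [ω.getLastD 1 + j]

/-- `a(ω) = S_ω(1/2)`. -/
def aw (ω : List ℕ) : ℝ := Sword ω (1 / 2)

/-- `a(ω, ∞) = S_{ω⁻(ω_{|ω|}+1)}(1/2) + s_{ω⁻(ω_{|ω|}+1)}`. -/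
def awInf (ω : List ℕ) : ℝ := Sword (wordInc ω 1) (1 / 2) + sword (wordInc ω 1)

/-- `J_{(ω,∞)} = ⋃_{j ≥ 1} J_{ω⁻(ω_{|ω|}+j)}`. -/
def JwordInf (ω : List ℕ) : Set ℝ := ⋃ j : ℕ, Jword (wordInc ω (j + 1))

/-- A (nonempty) word over the alphabet `ℕ = {1, 2, 3, …}`. -/
def IsWord (ω : List ℕ) : Prop := ω ≠ [] ∧ ∀ i ∈ ω, 1 ≤ i

/-- The self-similarity equation `P = ∑_{j=1}^∞ 2^{-j} · P ∘ S_j^{-1}`. -/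
def SelfSim (P : Measure ℝ) : Prop :=
  P = Measure.sum fun j : ℕ => ((2 : ℝ≥0∞) ^ (j + 1))⁻¹ • P.map (Smap (j + 1))

/-- The distortion error `∫ min_{a ∈ A} (x - a)² dP(x)` of a set `A` of points. -/
def err (P : Measure ℝ) (A : Set ℝ) : ℝ :=
  ∫ x, sInf ((fun a => (x - a) ^ 2) '' A) ∂P

/-- The `n`-th quantization error. -/
def quantErr (P : Measure ℝ) (n : ℕ) : ℝ :=
  sInf {v | ∃ A : Set ℝ, A.Finite ∧ A.Nonempty ∧ A.ncard ≤ n ∧ v = err P A}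

/-- An optimal set of `n`-means. -/
def IsOptimal (P : Measure ℝ) (n : ℕ) (A : Set ℝ) : Prop :=
  A.Finite ∧ A.Nonempty ∧ A.ncard ≤ n ∧ err P A = quantErr P n

/-- The Voronoi region of `a` with respect to `A`. -/
def voronoi (A : Set ℝ) (a : ℝ) : Set ℝ := {x | ∀ b ∈ A, |x - a| ≤ |x - b|}

/-- `α(ℓ) = {a(ω) : p_ω = 2^{-ℓ}} ∪ {a(ω,∞) : p_ω = 2^{-ℓ}}`. -/
def alphaSet (l : ℕ) : Set ℝ :=
  {x | ∃ ω : List ℕ, IsWord ω ∧ pword ω = (2 : ℝ)⁻¹ ^ l ∧ (x = aw ω ∨ x = awInf ω)}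

/-- The set `α_n(I)` built from `α(ℓ)` and `I ⊆ α(ℓ)`. -/
def alphaNI (l : ℕ) (I : Set ℝ) : Set ℝ :=
  (alphaSet l \ I)
    ∪ {x | ∃ ω : List ℕ, IsWord ω ∧ pword ω = (2 : ℝ)⁻¹ ^ l ∧ aw ω ∈ I ∧
        (x = aw (ω ++ [1]) ∨ x = awInf (ω ++ [1]))}
    ∪ {x | ∃ ω : List ℕ, IsWord ω ∧ pword ω = (2 : ℝ)⁻¹ ^ l ∧ awInf ω ∈ I ∧
        (x = aw (wordInc ω 1) ∨ x = awInf (wordInc ω 1))}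

/-! The self-similarity equation collapses to that of the Cantor measure,
`P = ½ P ∘ cantorL⁻¹ + ½ P ∘ cantorR⁻¹` with `cantorL x = x / 3`, `cantorR x = x / 3 + 2 / 3`,
because `S_{j+2} = cantorR ∘ S_{j+1}`. Splitting each of the four level-two intervals at its
midpoint gives `V_n ≤ V_4 ≤ 1/648`. An optimal set lies in `[0, 1]` and, `P` having no atoms, it
has positive error on each of `[0, 1/3]` and `[2/3, 1]`. If it had at most one point `c` in
`[0, 1/3]`, all its other points would lie beyond `1/3`, so its error on `[0, 1/3]` would be at
least that of `{c, 1/3}`, which by self-similarity is `1/18` of the error of `{3c, 1}`; computing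
with the moments `∫ x = 1/2`, `∫ x² = 3/8` shows the latter is at least `1/36`, and the total
error would exceed `1/648`. The reflection `x ↦ 1 - x` preserves the Cantor equation and gives
the right end.
-/

open scoped Pointwise

def minSqDist (A : Set ℝ) (x : ℝ) : ℝ := sInf ((fun a => (x - a) ^ 2) '' A)

section minSqDist

variable {A : Set ℝ} {a x : ℝ}

lemma bddBelow_image_sq_sub (A : Set ℝ) (x : ℝ) : BddBelow ((fun a => (x - a) ^ 2) '' A) :=
  ⟨0, by rintro _ ⟨a, -, rfl⟩; positivity⟩

lemma minSqDist_nonneg (A : Set ℝ) (x : ℝ) : 0 ≤ minSqDist A x :=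
  Real.sInf_nonneg (by rintro _ ⟨a, -, rfl⟩; positivity)

lemma minSqDist_singleton (a x : ℝ) : minSqDist {a} x = (x - a) ^ 2 := by
  simp [minSqDist]

lemma minSqDist_pair (a b x : ℝ) : minSqDist {a, b} x = min ((x - a) ^ 2) ((x - b) ^ 2) := by
  rw [minSqDist, image_pair, csInf_pair]

lemma minSqDist_le (ha : a ∈ A) (x : ℝ) : minSqDist A x ≤ (x - a) ^ 2 :=
  csInf_le (bddBelow_image_sq_sub A x) ⟨a, ha, rfl⟩

lemma le_minSqDist {c : ℝ} (hne : A.Nonempty) (h : ∀ a ∈ A, c ≤ (x - a) ^ 2) :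
    c ≤ minSqDist A x :=
  le_csInf (hne.image _) (by rintro _ ⟨a, ha, rfl⟩; exact h a ha)

lemma minSqDist_mono {B : Set ℝ} (hAB : A ⊆ B) (hA : A.Nonempty) (x : ℝ) :
    minSqDist B x ≤ minSqDist A x :=
  csInf_le_csInf (bddBelow_image_sq_sub B x) (hA.image _) (image_mono hAB)

lemma exists_minSqDist_eq (hfin : A.Finite) (hne : A.Nonempty) (x : ℝ) :
    ∃ a ∈ A, minSqDist A x = (x - a) ^ 2 := by
  obtain ⟨a, ha, h⟩ := (hne.image (fun a => (x - a) ^ 2)).csInf_mem (hfin.image _)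
  exact ⟨a, ha, h.symm⟩

lemma minSqDist_pos (hfin : A.Finite) (hne : A.Nonempty) (hx : x ∉ A) : 0 < minSqDist A x := by
  obtain ⟨a, ha, h⟩ := exists_minSqDist_eq hfin hne x
  rw [h, sq_pos_iff, sub_ne_zero]
  rintro rfl
  exact hx ha

lemma continuous_minSqDist (hfin : A.Finite) (hne : A.Nonempty) : Continuous (minSqDist A) := by
  have hne' : hfin.toFinset.Nonempty := hfin.toFinset_nonempty.2 hne
  have h : minSqDist A = fun x => hfin.toFinset.inf' hne' (fun a => (x - a) ^ 2) := by
    ext x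
    rw [Finset.inf'_eq_csInf_image, hfin.coe_toFinset, minSqDist]
  rw [h]
  exact Continuous.finset_inf'_apply hne' fun a _ => by fun_prop

lemma minSqDist_image {g : ℝ → ℝ} {m : ℝ} (hg : ∀ x y, g x - g y = m * (x - y)) (A : Set ℝ)
    (x : ℝ) : minSqDist (g '' A) (g x) = m ^ 2 * minSqDist A x := by
  have h : (fun a => (g x - a) ^ 2) '' (g '' A) = m ^ 2 • (fun a => (x - a) ^ 2) '' A := by
    rw [image_image, ← image_smul, image_image]
    simp only [hg, smul_eq_mul, mul_pow]
  rw [minSqDist, h, Real.sInf_smul_of_nonneg (sq_nonneg m), smul_eq_mul, minSqDist]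

lemma minSqDist_eq_of_mem_voronoi (ha : a ∈ A) (hx : x ∈ voronoi A a) :
    minSqDist A x = (x - a) ^ 2 :=
  (minSqDist_le ha x).antisymm <|
    le_minSqDist ⟨a, ha⟩ fun b hb => sq_le_sq.2 (hx b hb)

lemma mem_voronoi_of_minSqDist_eq (h : minSqDist A x = (x - a) ^ 2) : x ∈ voronoi A a :=
  fun _ hb => sq_le_sq.1 (h ▸ minSqDist_le hb x)

end minSqDist

lemma integral_lt_integral_of_ae_le_of_measure_setOf_lt_ne_zero {α : Type*}
    [MeasurableSpace α] {μ : Measure α} {f g : α → ℝ} (hf : Integrable f μ)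
    (hg : Integrable g μ) (hle : ∀ᵐ x ∂μ, f x ≤ g x)
    (hlt : μ {x | f x < g x} ≠ 0) : ∫ x, f x ∂μ < ∫ x, g x ∂μ := by
  have hpos : 0 < ∫ x, (g x - f x) ∂μ := by
    refine (integral_pos_iff_support_of_nonneg_ae ?_ (hg.sub hf)).2 ?_
    · filter_upwards [hle] with x hx using sub_nonneg.2 hx
    · refine (pos_iff_ne_zero.2 hlt).trans_le (measure_mono fun x hx => ?_)
      exact (sub_pos.2 hx).ne'
  rw [integral_sub hg hf] at hpos
  linarith

section Quantization

variable {P : Measure ℝ}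

lemma err_eq_integral_minSqDist (A : Set ℝ) : err P A = ∫ x, minSqDist A x ∂P := rfl

lemma err_nonneg (A : Set ℝ) : 0 ≤ err P A :=
  integral_nonneg (minSqDist_nonneg A)

lemma quantErr_le_err {A : Set ℝ} {n : ℕ} (hfin : A.Finite) (hne : A.Nonempty)
    (hcard : A.ncard ≤ n) : quantErr P n ≤ err P A :=
  csInf_le ⟨0, by rintro _ ⟨B, -, -, -, rfl⟩; exact err_nonneg B⟩ ⟨A, hfin, hne, hcard, rfl⟩

variable [IsProbabilityMeasure P]

lemma ae_mem_Icc_of_measure_Icc_eq_one (hsupp : P (Icc 0 1) = 1) :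
    ∀ᵐ x ∂P, x ∈ Icc (0 : ℝ) 1 :=
  ae_iff.2 ((prob_compl_eq_zero_iff measurableSet_Icc).2 hsupp)

lemma restrict_Icc_of_measure_Icc_eq_one (hsupp : P (Icc 0 1) = 1) :
    P.restrict (Icc 0 1) = P :=
  Measure.restrict_eq_self_of_ae_mem (ae_mem_Icc_of_measure_Icc_eq_one hsupp)

lemma measure_eq_zero_of_subset_compl_Icc (hsupp : P (Icc 0 1) = 1) {s : Set ℝ}
    (hs : s ⊆ (Icc 0 1)ᶜ) : P s = 0 :=
  measure_mono_null hs ((prob_compl_eq_zero_iff measurableSet_Icc).2 hsupp)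

lemma Continuous.integrable_of_measure_Icc_eq_one {f : ℝ → ℝ} (hf : Continuous f)
    (hsupp : P (Icc 0 1) = 1) : Integrable f P := by
  rw [← restrict_Icc_of_measure_Icc_eq_one hsupp]
  exact hf.continuousOn.integrableOn_compact isCompact_Icc

lemma integrable_minSqDist (hsupp : P (Icc 0 1) = 1) {A : Set ℝ} (hfin : A.Finite)
    (hne : A.Nonempty) : Integrable (minSqDist A) P :=
  (continuous_minSqDist hfin hne).integrable_of_measure_Icc_eq_one hsupp

lemma integral_sub_sq_eq_moments (hsupp : P (Icc 0 1) = 1) (c : ℝ) :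
    ∫ x, (x - c) ^ 2 ∂P = ∫ x, x ^ 2 ∂P - 2 * c * ∫ x, x ∂P + c ^ 2 := by
  have hsq : Integrable (fun x : ℝ => x ^ 2) P :=
    (continuous_pow 2).integrable_of_measure_Icc_eq_one hsupp
  have hid : Integrable (fun x : ℝ => 2 * c * x) P :=
    (continuous_const_mul _).integrable_of_measure_Icc_eq_one hsupp
  calc ∫ x, (x - c) ^ 2 ∂P = ∫ x, (x ^ 2 - 2 * c * x + c ^ 2) ∂P := by congr with x; ring
    _ = _ := by
      rw [integral_add (f := fun x => x ^ 2 - 2 * c * x) (hsq.sub hid) (integrable_const _),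
        integral_sub hsq hid,
        integral_const_mul, integral_const]
      simp

lemma setIntegral_add_setIntegral_le_err (hsupp : P (Icc 0 1) = 1) {A s t : Set ℝ}
    (hfin : A.Finite) (hne : A.Nonempty) (hst : Disjoint s t) (ht : MeasurableSet t) :
    ∫ x in s, minSqDist A x ∂P + ∫ x in t, minSqDist A x ∂P ≤ err P A := by
  have hint := integrable_minSqDist hsupp hfin hne
  rw [← setIntegral_union hst ht hint.integrableOn hint.integrableOn]
  exact setIntegral_le_integral hint (ae_of_all _ (minSqDist_nonneg A))

/-- Adding a point of the support at positive distance from `A` strictly lowers the error. -/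
lemma exists_err_insert_lt [NullSingletonClass P] (hsupp : P (Icc 0 1) = 1) {A : Set ℝ}
    (hfin : A.Finite) (hne : A.Nonempty) : ∃ b, err P (insert b A) < err P A := by
  obtain ⟨b, hb, hbA⟩ : (P.support \ A).Nonempty := by
    by_contra h
    rw [not_nonempty_iff_eq_empty, sdiff_eq_empty] at h
    have : P univ ≤ P A + P P.supportᶜ :=
      (measure_mono fun x _ => (em (x ∈ P.support)).imp (@h x) id).trans (measure_union_le _ _)
    simp [hfin.measure_zero P] at this
  obtain ⟨ε, hε, hball⟩ := Metric.isOpen_iff.1 hfin.isClosed.isOpen_compl b hbA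
  refine ⟨b, integral_lt_integral_of_ae_le_of_measure_setOf_lt_ne_zero
    (integrable_minSqDist hsupp (hfin.insert b) (insert_nonempty b A))
    (integrable_minSqDist hsupp hfin hne)
    (ae_of_all _ (minSqDist_mono (subset_insert b A) hne)) fun h0 => ?_⟩
  refine ((P.mem_support_iff_forall b).1 hb _ (Metric.ball_mem_nhds b (half_pos hε))).ne'
    (measure_mono_null (fun x hx => ?_) h0)
  rw [Metric.mem_ball, Real.dist_eq] at hx
  have hfar : ∀ a ∈ A, ε / 2 ≤ |x - a| := fun a ha => by
    have : ε ≤ |a - b| := not_lt.1 fun h => hball (by rwa [Metric.mem_ball, Real.dist_eq]) ha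
    linarith [abs_sub_le a x b, abs_sub_comm a x]
  calc minSqDist (insert b A) x ≤ (x - b) ^ 2 := minSqDist_le (mem_insert b A) x
    _ < (ε / 2) ^ 2 := by rw [← sq_abs]; gcongr
    _ ≤ minSqDist A x := le_minSqDist hne fun a ha => by
        rw [← sq_abs (x - a)]; gcongr; exact hfar a ha

end Quantization

lemma Set.ncard_insert_sdiff_singleton_le {X : Type*} {s : Set X} {a : X} (b : X)
    (hs : s.Finite) (ha : a ∈ s) : (insert b (s \ {a})).ncard ≤ s.ncard :=
  (ncard_insert_le _ _).trans (ncard_sdiff_singleton_add_one ha hs).le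

section Optimal

variable {P : Measure ℝ} [IsProbabilityMeasure P] [NullSingletonClass P] {n : ℕ} {α : Set ℝ}
  {a : ℝ}

/-- Otherwise `a` could be dropped without changing the error and replaced by a better point. -/
lemma IsOptimal.measure_voronoi_ne_zero (hsupp : P (Icc 0 1) = 1) (hα : IsOptimal P n α)
    (ha : a ∈ α) : P (voronoi α a) ≠ 0 := by
  obtain ⟨hfin, -, hcard, herr⟩ := hα
  intro h0
  have hne : (α \ {a}).Nonempty := by
    by_contra hem
    rw [not_nonempty_iff_eq_empty, sdiff_eq_empty] at hem
    have : voronoi α a = univ := eq_univ_of_forall fun x b hb => by rw [hem hb]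
    simp [this] at h0
  have herase : err P (α \ {a}) = err P α := by
    refine integral_congr_ae (measure_mono_null (fun x hx => ?_) h0)
    by_contra hxv
    obtain ⟨c, hc, hxc⟩ := exists_minSqDist_eq hfin ⟨a, ha⟩ x
    have hca : c ≠ a := by rintro rfl; exact hxv (mem_voronoi_of_minSqDist_eq hxc)
    exact hx (le_antisymm ((minSqDist_le (A := α \ {a}) ⟨hc, hca⟩ x).trans hxc.ge)
      (minSqDist_mono sdiff_subset hne x))
  obtain ⟨b, hb⟩ := exists_err_insert_lt hsupp hfin.sdiff hne
  exact (quantErr_le_err (hfin.sdiff.insert b) (insert_nonempty _ _)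
    ((ncard_insert_sdiff_singleton_le b hfin ha).trans hcard)).not_gt
    (herr ▸ herase ▸ hb)

/-- A point outside `[0, 1]` can be moved to the nearer endpoint, strictly gaining on its
Voronoi region. -/
lemma IsOptimal.subset_Icc (hsupp : P (Icc 0 1) = 1) (hα : IsOptimal P n α) :
    α ⊆ Icc 0 1 := by
  intro a ha
  by_contra hout
  obtain ⟨b, hb⟩ : ∃ b, ∀ x ∈ Icc (0 : ℝ) 1, (x - b) ^ 2 < (x - a) ^ 2 := by
    rcases not_and_or.1 hout with h | h
    · exact ⟨0, fun x hx => by nlinarith [hx.1, hx.2]⟩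
    · exact ⟨1, fun x hx => by nlinarith [hx.1, hx.2]⟩
  have ⟨hfin, hne, hcard, herr⟩ := hα
  set β := insert b (α \ {a})
  have hle : ∀ x ∈ Icc (0 : ℝ) 1, minSqDist β x ≤ minSqDist α x := by
    intro x hx
    obtain ⟨c, hc, hxc⟩ := exists_minSqDist_eq hfin hne x
    rw [hxc]
    by_cases hca : c = a
    · exact hca ▸ (minSqDist_le (mem_insert b _) x).trans (hb x hx).le
    · exact minSqDist_le (mem_insert_of_mem b (mem_sdiff_singleton.2 ⟨hc, hca⟩)) x
  have hlt : P (voronoi α a ∩ Icc 0 1) ≤ P {x | minSqDist β x < minSqDist α x} :=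
    measure_mono fun x ⟨hxv, hx⟩ => (minSqDist_le (mem_insert b _) x).trans_lt
      ((hb x hx).trans_eq (minSqDist_eq_of_mem_voronoi ha hxv).symm)
  rw [measure_inter_conull ((prob_compl_eq_zero_iff measurableSet_Icc).2 hsupp)] at hlt
  have hβ : err P β < err P α :=
    integral_lt_integral_of_ae_le_of_measure_setOf_lt_ne_zero
      (integrable_minSqDist hsupp (hfin.sdiff.insert b) (insert_nonempty _ _))
      (integrable_minSqDist hsupp hfin hne) ((ae_mem_Icc_of_measure_Icc_eq_one hsupp).mono hle)
      fun h0 => hα.measure_voronoi_ne_zero hsupp ha (nonpos_iff_eq_zero.1 (h0 ▸ hlt))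
  exact (quantErr_le_err (hfin.sdiff.insert b) (insert_nonempty _ _)
    ((ncard_insert_sdiff_singleton_le b hfin ha).trans hcard)).not_gt (herr ▸ hβ)

end Optimal

def cantorL (x : ℝ) : ℝ := x / 3

def cantorR (x : ℝ) : ℝ := x / 3 + 2 / 3

def reflect (x : ℝ) : ℝ := 1 - x

@[fun_prop] lemma continuous_cantorL : Continuous cantorL := by unfold cantorL; fun_prop

@[fun_prop] lemma continuous_cantorR : Continuous cantorR := by unfold cantorR; fun_prop

@[fun_prop] lemma continuous_reflect : Continuous reflect := by unfold reflect; fun_prop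

lemma cantorL_sub_sq (x c : ℝ) : (cantorL x - c) ^ 2 = (x - 3 * c) ^ 2 / 9 := by
  unfold cantorL; ring

lemma cantorR_sub_sq (x c : ℝ) : (cantorR x - c) ^ 2 = (x - (3 * c - 2)) ^ 2 / 9 := by
  unfold cantorR; ring

lemma disjoint_Icc_zero_third_Icc_two_thirds_one :
    Disjoint (Icc (0 : ℝ) (1 / 3)) (Icc (2 / 3) 1) :=
  disjoint_left.2 fun _ h₁ h₂ => by linarith [h₁.2, h₂.1]

lemma preimage_cantorL_Icc (a b : ℝ) : cantorL ⁻¹' Icc a b = Icc (3 * a) (3 * b) := by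
  ext x; simp only [cantorL, mem_preimage, mem_Icc]; constructor <;> intro h <;> constructor <;>
    linarith [h.1, h.2]

lemma preimage_cantorR_Icc (a b : ℝ) : cantorR ⁻¹' Icc a b = Icc (3 * a - 2) (3 * b - 2) := by
  ext x; simp only [cantorR, mem_preimage, mem_Icc]; constructor <;> intro h <;> constructor <;>
    linarith [h.1, h.2]

lemma preimage_reflect_Icc (a b : ℝ) : reflect ⁻¹' Icc a b = Icc (1 - b) (1 - a) := by
  ext x; simp only [reflect, mem_preimage, mem_Icc]; constructor <;> intro h <;> constructor <;>
    linarith [h.1, h.2]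

/-- The self-similarity equation of the Cantor measure. -/
def IsCantorMeasure (μ : Measure ℝ) : Prop :=
  μ = (2⁻¹ : ℝ≥0∞) • μ.map cantorL + (2⁻¹ : ℝ≥0∞) • μ.map cantorR

lemma Smap_one : Smap 1 = cantorL := by
  ext x; simp [Smap, cantorL]

lemma Smap_add_two (j : ℕ) : Smap (j + 2) = cantorR ∘ Smap (j + 1) := by
  ext x
  simp only [Smap, cantorR, Function.comp_apply, Nat.add_sub_cancel,
    show j + 2 - 1 = j + 1 by omega]
  field_simp
  ring

lemma SelfSim.isCantorMeasure {P : Measure ℝ} (hP : SelfSim P) : IsCantorMeasure P := by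
  have hsum : ∀ s, MeasurableSet s →
      P s = ∑' j : ℕ, ((2 : ℝ≥0∞) ^ (j + 1))⁻¹ * P (Smap (j + 1) ⁻¹' s) := fun s hs => by
    conv_lhs => rw [hP]
    simp only [Measure.sum_apply _ hs, Measure.smul_apply, smul_eq_mul]
    refine tsum_congr fun j => ?_
    rw [Measure.map_apply (by unfold Smap; fun_prop) hs]
  ext s hs
  rw [Measure.add_apply, Measure.smul_apply, Measure.smul_apply,
    Measure.map_apply continuous_cantorL.measurable hs,
    Measure.map_apply continuous_cantorR.measurable hs, smul_eq_mul, smul_eq_mul,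
    hsum s hs, hsum _ (continuous_cantorR.measurable hs), tsum_eq_zero_add' ENNReal.summable,
    ← ENNReal.tsum_mul_left]
  congr 1
  · simp [Smap_one]
  · refine tsum_congr fun j => ?_
    rw [Smap_add_two, preimage_comp, pow_succ,
      ENNReal.mul_inv (Or.inr (by norm_num)) (Or.inl (by simp)), mul_comm _ (2⁻¹ : ℝ≥0∞),
      mul_assoc]

lemma IsCantorMeasure.map_reflect {μ : Measure ℝ} (hμ : IsCantorMeasure μ) :
    IsCantorMeasure (μ.map reflect) := by
  have hL : reflect ∘ cantorL = cantorR ∘ reflect := by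
    ext x; simp only [Function.comp_apply, reflect, cantorL, cantorR]; ring
  have hR : reflect ∘ cantorR = cantorL ∘ reflect := by
    ext x; simp only [Function.comp_apply, reflect, cantorL, cantorR]; ring
  unfold IsCantorMeasure
  conv_lhs => rw [hμ]
  rw [Measure.map_add _ _ continuous_reflect.measurable, Measure.map_smul, Measure.map_smul,
    Measure.map_map continuous_reflect.measurable continuous_cantorL.measurable,
    Measure.map_map continuous_reflect.measurable continuous_cantorR.measurable,
    Measure.map_map continuous_cantorL.measurable continuous_reflect.measurable,
    Measure.map_map continuous_cantorR.measurable continuous_reflect.measurable, hL, hR, add_comm]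

def cantorSplit (A : Set ℝ) : Set ℝ := cantorL '' A ∪ cantorR '' A

lemma Set.Finite.cantorSplit {A : Set ℝ} (hA : A.Finite) : (cantorSplit A).Finite :=
  (hA.image _).union (hA.image _)

lemma Set.Nonempty.cantorSplit {A : Set ℝ} (hA : A.Nonempty) : (cantorSplit A).Nonempty :=
  (hA.image _).inl

lemma ncard_cantorSplit_le {A : Set ℝ} (hA : A.Finite) :
    (cantorSplit A).ncard ≤ 2 * A.ncard := by
  have := ncard_image_le (f := cantorL) hA
  have := ncard_image_le (f := cantorR) hA
  have := ncard_union_le (cantorL '' A) (cantorR '' A)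
  rw [cantorSplit]
  omega

lemma minSqDist_cantorL_image (A : Set ℝ) (x : ℝ) :
    minSqDist (cantorL '' A) (cantorL x) = minSqDist A x / 9 := by
  rw [minSqDist_image (m := 1 / 3) (fun x y => by unfold cantorL; ring)]
  ring

lemma minSqDist_cantorR_image (A : Set ℝ) (x : ℝ) :
    minSqDist (cantorR '' A) (cantorR x) = minSqDist A x / 9 := by
  rw [minSqDist_image (m := 1 / 3) (fun x y => by unfold cantorR; ring)]
  ring

lemma reflect_injective : Function.Injective reflect :=
  fun x y h => by unfold reflect at h; linarith

lemma err_map_reflect {μ : Measure ℝ} {A : Set ℝ} (hfin : A.Finite) (hne : A.Nonempty) :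
    err (μ.map reflect) (reflect '' A) = err μ A := by
  rw [err_eq_integral_minSqDist, integral_map continuous_reflect.aemeasurable
    (continuous_minSqDist (hfin.image _) (hne.image _)).aestronglyMeasurable]
  simp only [minSqDist_image (g := reflect) (m := -1) (fun x y => by unfold reflect; ring),
    neg_one_sq, one_mul]
  rfl

lemma map_reflect_Icc_zero_one (μ : Measure ℝ) : μ.map reflect (Icc 0 1) = μ (Icc 0 1) := by
  rw [Measure.map_apply continuous_reflect.measurable measurableSet_Icc, preimage_reflect_Icc]
  norm_num

lemma image_reflect_subset_Icc {α : Set ℝ} (hα : α ⊆ Icc 0 1) : reflect '' α ⊆ Icc 0 1 := by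
  rw [image_subset_iff, preimage_reflect_Icc]
  norm_num
  exact hα

lemma ncard_image_reflect_inter_Icc_zero_third (α : Set ℝ) :
    (reflect '' α ∩ Icc 0 (1 / 3)).ncard = (α ∩ Icc (2 / 3) 1).ncard := by
  rw [← image_inter_preimage, preimage_reflect_Icc, ncard_image_of_injective _ reflect_injective]
  norm_num

namespace IsCantorMeasure

lemma measure_eq {μ : Measure ℝ} (hμ : IsCantorMeasure μ) {s : Set ℝ} (hs : MeasurableSet s) :
    μ s = 2⁻¹ * μ (cantorL ⁻¹' s) + 2⁻¹ * μ (cantorR ⁻¹' s) := by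
  conv_lhs => rw [hμ]
  rw [Measure.add_apply, Measure.smul_apply, Measure.smul_apply,
    Measure.map_apply continuous_cantorL.measurable hs,
    Measure.map_apply continuous_cantorR.measurable hs, smul_eq_mul, smul_eq_mul]

variable {μ : Measure ℝ} [IsProbabilityMeasure μ] (hμ : IsCantorMeasure μ)
  (hsupp : μ (Icc 0 1) = 1)
include hμ hsupp

lemma restrict_Icc_zero_third : μ.restrict (Icc 0 (1 / 3)) = (2⁻¹ : ℝ≥0∞) • μ.map cantorL := by
  conv_lhs => rw [hμ]
  rw [Measure.restrict_add, Measure.restrict_smul, Measure.restrict_smul,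
    Measure.restrict_map continuous_cantorL.measurable measurableSet_Icc,
    Measure.restrict_map continuous_cantorR.measurable measurableSet_Icc,
    preimage_cantorL_Icc, preimage_cantorR_Icc]
  norm_num only [mul_zero, mul_one]
  rw [restrict_Icc_of_measure_Icc_eq_one hsupp, Measure.restrict_eq_zero.2
    (measure_eq_zero_of_subset_compl_Icc hsupp fun x hx h => by linarith [hx.2, h.1]),
    Measure.map_zero, smul_zero, add_zero]

lemma restrict_Icc_two_thirds_one :
    μ.restrict (Icc (2 / 3) 1) = (2⁻¹ : ℝ≥0∞) • μ.map cantorR := by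
  conv_lhs => rw [hμ]
  rw [Measure.restrict_add, Measure.restrict_smul, Measure.restrict_smul,
    Measure.restrict_map continuous_cantorL.measurable measurableSet_Icc,
    Measure.restrict_map continuous_cantorR.measurable measurableSet_Icc,
    preimage_cantorL_Icc, preimage_cantorR_Icc]
  norm_num only [mul_one]
  rw [restrict_Icc_of_measure_Icc_eq_one hsupp, Measure.restrict_eq_zero.2
    (measure_eq_zero_of_subset_compl_Icc hsupp fun x hx h => by linarith [hx.1, h.2]),
    Measure.map_zero, smul_zero, zero_add]

lemma measure_Icc_two_thirds_one : μ (Icc (2 / 3) 1) = 2⁻¹ := by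
  rw [← Measure.restrict_apply_univ, restrict_Icc_two_thirds_one hμ hsupp, Measure.smul_apply,
    Measure.map_apply continuous_cantorR.measurable MeasurableSet.univ, preimage_univ,
    measure_univ, smul_eq_mul, mul_one]

lemma exists_measure_singleton_le (x : ℝ) : ∃ y, μ {x} ≤ 2⁻¹ * μ {y} := by
  have hL : cantorL ⁻¹' {x} = {3 * x} := by
    ext y; simp [cantorL]; constructor <;> intro <;> linarith
  have hR : cantorR ⁻¹' {x} = {3 * x - 2} := by
    ext y; simp [cantorR]; constructor <;> intro <;> linarith
  rw [hμ.measure_eq (measurableSet_singleton x), hL, hR]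
  rcases lt_or_ge x (2 / 3) with hx | hx
  · refine ⟨3 * x, le_of_eq ?_⟩
    rw [measure_eq_zero_of_subset_compl_Icc hsupp (s := {3 * x - 2})
      (by rintro _ rfl h; linarith [h.1]), mul_zero, add_zero]
  · refine ⟨3 * x - 2, le_of_eq ?_⟩
    rw [measure_eq_zero_of_subset_compl_Icc hsupp (s := {3 * x})
      (by rintro _ rfl h; linarith [h.2]), mul_zero, zero_add]

lemma nullSingletonClass : NullSingletonClass μ := by
  have hpow : ∀ (k : ℕ) (x : ℝ), μ {x} ≤ 2⁻¹ ^ k := by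
    intro k
    induction k with
    | zero => exact fun x => by simpa using prob_le_one
    | succ k ih =>
      intro x
      obtain ⟨y, hy⟩ := exists_measure_singleton_le hμ hsupp x
      exact hy.trans (by rw [pow_succ']; gcongr; exact ih y)
  refine ⟨fun x => by_contra fun h => ?_⟩
  obtain ⟨k, hk⟩ := ENNReal.exists_inv_two_pow_lt h
  exact (hpow k x).not_gt hk

lemma integral_eq_cantorL_add_cantorR {f : ℝ → ℝ} (hf : Continuous f) :
    ∫ x, f x ∂μ = 2⁻¹ * ∫ x, f (cantorL x) ∂μ + 2⁻¹ * ∫ x, f (cantorR x) ∂μ := by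
  have hint : ∀ g : ℝ → ℝ, Continuous g → Integrable f ((2⁻¹ : ℝ≥0∞) • μ.map g) := fun g hg =>
    ((integrable_map_measure hf.aestronglyMeasurable hg.measurable.aemeasurable).2
      ((hf.comp hg).integrable_of_measure_Icc_eq_one hsupp)).smul_measure (by simp)
  conv_lhs => rw [hμ]
  rw [integral_add_measure (hint _ continuous_cantorL) (hint _ continuous_cantorR),
    integral_smul_measure, integral_smul_measure,
    integral_map continuous_cantorL.aemeasurable hf.aestronglyMeasurable,
    integral_map continuous_cantorR.aemeasurable hf.aestronglyMeasurable]
  simp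

lemma setIntegral_Icc_zero_third {f : ℝ → ℝ} (hf : Continuous f) :
    ∫ x in Icc 0 (1 / 3), f x ∂μ = 2⁻¹ * ∫ x, f (cantorL x) ∂μ := by
  rw [restrict_Icc_zero_third hμ hsupp, integral_smul_measure,
    integral_map continuous_cantorL.aemeasurable hf.aestronglyMeasurable]
  simp

lemma setIntegral_Icc_two_thirds_one {f : ℝ → ℝ} (hf : Continuous f) :
    ∫ x in Icc (2 / 3) 1, f x ∂μ = 2⁻¹ * ∫ x, f (cantorR x) ∂μ := by
  rw [restrict_Icc_two_thirds_one hμ hsupp, integral_smul_measure,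
    integral_map continuous_cantorR.aemeasurable hf.aestronglyMeasurable]
  simp

lemma integral_sub_sq (c : ℝ) : ∫ x, (x - c) ^ 2 ∂μ = (c - 1 / 2) ^ 2 + 1 / 8 := by
  have hrec : ∀ c : ℝ, ∫ x, (x - c) ^ 2 ∂μ
      = (∫ x, (x - 3 * c) ^ 2 ∂μ + ∫ x, (x - (3 * c - 2)) ^ 2 ∂μ) / 18 := fun c => by
    rw [integral_eq_cantorL_add_cantorR hμ hsupp (f := fun x => (x - c) ^ 2) (by fun_prop)]
    simp only [cantorL_sub_sq, cantorR_sub_sq, integral_div]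
    ring
  have h₀ := hrec 0
  have h₁ := hrec 1
  simp only [integral_sub_sq_eq_moments hsupp] at h₀ h₁ ⊢
  have hm₁ : ∫ x, x ∂μ = 1 / 2 := by linarith
  have hm₂ : ∫ x, x ^ 2 ∂μ = 3 / 8 := by linarith
  rw [hm₁, hm₂]
  ring

lemma setIntegral_Icc_zero_third_sub_sq (c : ℝ) :
    ∫ x in Icc 0 (1 / 3), (x - c) ^ 2 ∂μ = ((c - 1 / 6) ^ 2 + 1 / 72) / 2 := by
  rw [setIntegral_Icc_zero_third hμ hsupp (f := fun x => (x - c) ^ 2) (by fun_prop)]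
  simp only [cantorL_sub_sq, integral_div, integral_sub_sq hμ hsupp]
  ring

lemma setIntegral_Icc_two_thirds_one_sub_sq (c : ℝ) :
    ∫ x in Icc (2 / 3) 1, (x - c) ^ 2 ∂μ = ((c - 5 / 6) ^ 2 + 1 / 72) / 2 := by
  rw [setIntegral_Icc_two_thirds_one hμ hsupp (f := fun x => (x - c) ^ 2) (by fun_prop)]
  simp only [cantorR_sub_sq, integral_div, integral_sub_sq hμ hsupp]
  ring

lemma err_cantorSplit_le {A : Set ℝ} (hfin : A.Finite) (hne : A.Nonempty) :
    err μ (cantorSplit A) ≤ err μ A / 9 := by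
  have hcont := continuous_minSqDist hfin.cantorSplit hne.cantorSplit
  have hL : ∫ x, minSqDist (cantorSplit A) (cantorL x) ∂μ ≤ err μ A / 9 := by
    rw [err_eq_integral_minSqDist, ← integral_div]
    refine integral_mono ((hcont.comp continuous_cantorL).integrable_of_measure_Icc_eq_one hsupp)
      ((integrable_minSqDist hsupp hfin hne).div_const 9) fun x => ?_
    rw [← minSqDist_cantorL_image]
    exact minSqDist_mono subset_union_left (hne.image _) _
  have hR : ∫ x, minSqDist (cantorSplit A) (cantorR x) ∂μ ≤ err μ A / 9 := by
    rw [err_eq_integral_minSqDist, ← integral_div]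
    refine integral_mono ((hcont.comp continuous_cantorR).integrable_of_measure_Icc_eq_one hsupp)
      ((integrable_minSqDist hsupp hfin hne).div_const 9) fun x => ?_
    rw [← minSqDist_cantorR_image]
    exact minSqDist_mono subset_union_right (hne.image _) _
  rw [err_eq_integral_minSqDist, integral_eq_cantorL_add_cantorR hμ hsupp hcont]
  linarith

/-- Witness: the midpoints `1/18, 5/18, 13/18, 17/18` of the level-two intervals. -/
lemma quantErr_le {n : ℕ} (hn : 4 ≤ n) : quantErr μ n ≤ 1 / 648 := by
  have hfin₀ : ({1 / 2} : Set ℝ).Finite := finite_singleton _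
  have hne₀ : ({1 / 2} : Set ℝ).Nonempty := singleton_nonempty _
  have hcard : (cantorSplit (cantorSplit {1 / 2})).ncard ≤ n := by
    have := ncard_cantorSplit_le hfin₀.cantorSplit
    have := ncard_cantorSplit_le hfin₀
    rw [ncard_singleton] at this
    omega
  have herr₀ : err μ {1 / 2} = 1 / 8 := by
    simp only [err_eq_integral_minSqDist, minSqDist_singleton, integral_sub_sq hμ hsupp]
    norm_num
  refine (quantErr_le_err hfin₀.cantorSplit.cantorSplit hne₀.cantorSplit.cantorSplit hcard).trans ?_
  linarith [err_cantorSplit_le hμ hsupp hfin₀.cantorSplit hne₀.cantorSplit,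
    err_cantorSplit_le hμ hsupp hfin₀ hne₀]

lemma one_div_thirtysix_le_err_pair_one {c : ℝ} (hc : c ∈ Icc 0 1) : 1 / 36 ≤ err μ {c, 1} := by
  obtain ⟨hc₀, hc₁⟩ := hc
  have hf : Continuous (minSqDist {c, 1}) :=
    continuous_minSqDist (toFinite _) (insert_nonempty _ _)
  have mono : ∀ {a b : ℝ} {g : ℝ → ℝ}, Continuous g →
      (∀ x ∈ Icc a b, g x ≤ min ((x - c) ^ 2) ((x - 1) ^ 2)) →
      ∫ x in Icc a b, g x ∂μ ≤ ∫ x in Icc a b, minSqDist {c, 1} x ∂μ := fun hg h =>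
    setIntegral_mono_on (hg.integrable_of_measure_Icc_eq_one hsupp).integrableOn
      (hf.integrable_of_measure_Icc_eq_one hsupp).integrableOn measurableSet_Icc
      fun x hx => (h x hx).trans_eq (minSqDist_pair c 1 x).symm
  have hsplit := setIntegral_add_setIntegral_le_err hsupp (P := μ) (toFinite {c, 1})
    (insert_nonempty _ _) disjoint_Icc_zero_third_Icc_two_thirds_one measurableSet_Icc
  have hL : ((c - 1 / 6) ^ 2 + 1 / 72) / 2 ≤ ∫ x in Icc 0 (1 / 3), minSqDist {c, 1} x ∂μ :=
    setIntegral_Icc_zero_third_sub_sq hμ hsupp c ▸ mono (by fun_prop) fun x hx =>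
      le_min le_rfl (by nlinarith [hx.1, hx.2])
  have hR₁ : ∫ x in Icc (2 / 3) 1, (x - 1) ^ 2 ∂μ = 1 / 48 := by
    rw [setIntegral_Icc_two_thirds_one_sub_sq hμ hsupp]; norm_num
  rcases le_or_gt c (1 / 3) with h₁ | h₁
  · have hR : 1 / 48 ≤ ∫ x in Icc (2 / 3) 1, minSqDist {c, 1} x ∂μ :=
      hR₁ ▸ mono (by fun_prop) fun x hx => le_min (by nlinarith [hx.1, hx.2]) le_rfl
    nlinarith [sq_nonneg (c - 1 / 6)]
  rcases le_or_gt c (4 / 9) with h₂ | h₂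
  · have hR : 4 / 9 * (1 / 48) ≤ ∫ x in Icc (2 / 3) 1, minSqDist {c, 1} x ∂μ := by
      rw [← hR₁, ← integral_const_mul]
      refine mono (by fun_prop) fun x hx => le_min ?_ (by nlinarith [sq_nonneg (x - 1)])
      nlinarith [hx.1, hx.2, mul_self_le_mul_self (by linarith [hx.2] : (0 : ℝ) ≤ 2 / 3 * (1 - x))
        (by linarith [hx.1] : 2 / 3 * (1 - x) ≤ x - c)]
    nlinarith
  · have hR : 0 ≤ ∫ x in Icc (2 / 3) 1, minSqDist {c, 1} x ∂μ :=
      setIntegral_nonneg measurableSet_Icc fun x _ => minSqDist_nonneg _ x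
    nlinarith

lemma one_div_648_le_setIntegral_minSqDist_pair_third {c : ℝ} (hc : c ∈ Icc 0 (1 / 3)) :
    1 / 648 ≤ ∫ x in Icc 0 (1 / 3), minSqDist {c, 1 / 3} x ∂μ := by
  have himage : ({c, 1 / 3} : Set ℝ) = cantorL '' {3 * c, 1} := by
    simp only [image_pair, cantorL]
    ring_nf
  have h := one_div_thirtysix_le_err_pair_one hμ hsupp (c := 3 * c)
    ⟨by linarith [hc.1], by linarith [hc.2]⟩
  rw [setIntegral_Icc_zero_third hμ hsupp (continuous_minSqDist (toFinite _)
    (insert_nonempty _ _)), himage]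
  simp only [minSqDist_cantorL_image, integral_div]
  rw [err_eq_integral_minSqDist] at h
  linarith

lemma two_le_ncard_inter_Icc_zero_third {α : Set ℝ} (hfin : α.Finite) (hne : α.Nonempty)
    (hsub : α ⊆ Icc 0 1) (herr : err μ α ≤ 1 / 648) : 2 ≤ (α ∩ Icc 0 (1 / 3)).ncard := by
  have := hμ.nullSingletonClass hsupp
  by_contra! hlt
  obtain ⟨c, hc, hcα⟩ : ∃ c ∈ Icc (0 : ℝ) (1 / 3), ∀ a ∈ α ∩ Icc 0 (1 / 3), a = c := by
    rcases (α ∩ Icc 0 (1 / 3)).eq_empty_or_nonempty with hem | ⟨c, hc⟩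
    · exact ⟨0, by norm_num, fun a ha => (eq_empty_iff_forall_notMem.1 hem a ha).elim⟩
    · exact ⟨c, hc.2, fun a ha =>
        (ncard_le_one_iff (hfin.inter_of_left _)).1 (by omega) ha hc⟩
  have hint := integrable_minSqDist hsupp hfin hne
  have hleft : 1 / 648 ≤ ∫ x in Icc 0 (1 / 3), minSqDist α x ∂μ := by
    refine (one_div_648_le_setIntegral_minSqDist_pair_third hμ hsupp hc).trans
      (setIntegral_mono_on ((continuous_minSqDist (toFinite _) (insert_nonempty _ _)
        ).integrable_of_measure_Icc_eq_one hsupp).integrableOn hint.integrableOn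
        measurableSet_Icc fun x hx => le_minSqDist hne fun a ha => ?_)
    by_cases haL : a ∈ Icc 0 (1 / 3)
    · exact hcα a ⟨ha, haL⟩ ▸ minSqDist_le (mem_insert _ _) x
    · have : 1 / 3 < a := by
        by_contra!
        exact haL ⟨(hsub ha).1, this⟩
      exact (minSqDist_le (mem_insert_of_mem _ (mem_singleton _)) x).trans
        (by nlinarith [hx.1, hx.2])
  have hright : 0 < ∫ x in Icc (2 / 3) 1, minSqDist α x ∂μ := by
    rw [setIntegral_pos_iff_support_of_nonneg_ae (ae_of_all _ (minSqDist_nonneg α))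
      hint.integrableOn]
    calc (0 : ℝ≥0∞) < μ (Icc (2 / 3) 1 \ α) := by
          rw [measure_sdiff_null (hfin.measure_zero μ), measure_Icc_two_thirds_one hμ hsupp]
          norm_num
      _ ≤ μ (Function.support (minSqDist α) ∩ Icc (2 / 3) 1) :=
          measure_mono fun x hx => ⟨(minSqDist_pos hfin hne hx.2).ne', hx.1⟩
  linarith [setIntegral_add_setIntegral_le_err hsupp hfin hne
    disjoint_Icc_zero_third_Icc_two_thirds_one measurableSet_Icc (P := μ)]

end IsCantorMeasure

theorem optimal_two_in_each_end (P : Measure ℝ) [IsProbabilityMeasure P]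
    (hsupp : P (Set.Icc 0 1) = 1) (hself : SelfSim P)
    (n : ℕ) (hn : 4 ≤ n) (α : Set ℝ) (hα : IsOptimal P n α) :
    2 ≤ (α ∩ Set.Icc (0 : ℝ) (1 / 3)).ncard ∧ 2 ≤ (α ∩ Set.Icc (2 / 3 : ℝ) 1).ncard := by
  have hP := hself.isCantorMeasure
  have := hP.nullSingletonClass hsupp
  have hsub := hα.subset_Icc hsupp
  obtain ⟨hfin, hne, -, herr⟩ := hα
  have herr' : err P α ≤ 1 / 648 := herr ▸ hP.quantErr_le hsupp hn
  refine ⟨hP.two_le_ncard_inter_Icc_zero_third hsupp hfin hne hsub herr', ?_⟩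
  have := Measure.isProbabilityMeasure_map (μ := P) continuous_reflect.aemeasurable
  rw [← ncard_image_reflect_inter_Icc_zero_third]
  exact hP.map_reflect.two_le_ncard_inter_Icc_zero_third ((map_reflect_Icc_zero_one P).trans hsupp)
    (hfin.image _) (hne.image _) (image_reflect_subset_Icc hsub)
    ((err_map_reflect hfin hne).trans_le herr')

end
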